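/- arXiv:2509.13975 — 3 statements merged into one kernel-verified Lean document; each statement's English description precedes it below -/
import Mathlib

section
/- The log-posterior objective L is concave on the positive orthant: fix an integer K ≥ 2, parameters β ∈ (0,1], γ > 0, η > 0, a vector ν ∈ ℝ^K, and a vector s ∈ ℝ^K with all entries positive. Define, for α ∈ ℝ^K with all entries positive, L(α) := log Γ(K(1−β) + β·∑_{i=1}^K α_i) − ∑_{i=1}^K log Γ(β·α_i + (1−β)) + β·∑_{i=1}^K α_i·log s_i + γ·η·[log Γ(∑_{i=1}^K α_i) − ∑_{i=1}^K log Γ(α_i)] − γ·∑_{i=1}^K α_i·ν_i. Then L is a concave function of α on the set {α ∈ ℝ^K : α_i > 0 for all i}. -/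
/-!
Up to sign, `log Γ(∑ αᵢ) - ∑ log Γ(αᵢ)` is the logarithm of the multivariate Beta function,
which telescopes into two-variable terms `-log B(αᵢ, ∑_{j > i} αⱼ)`. Each `log B` is jointly
convex because `B(x, y) = ∫₀¹ t^(x-1) (1-t)^(y-1) dt` integrates a family that is log-affine in
`(x, y)`, so Hölder's inequality applies. `L` is then a nonnegative combination of this concave
function, composed with the affine maps `α ↦ βα + (1 - β)·1` and `α ↦ α`, plus a linear term.
-/

open MeasureTheory Set Real ProbabilityTheory

lemma setLIntegral_rpow_mul_one_sub_rpow_eq_beta {x y : ℝ} (hx : 0 < x) (hy : 0 < y) :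
    ∫⁻ t in Ioo 0 1, ENNReal.ofReal (t ^ (x - 1) * (1 - t) ^ (y - 1)) =
      ENNReal.ofReal (beta x y) := by
  have hB := beta_pos hx hy
  have h := lintegral_betaPDF_eq_one hx hy
  rw [lintegral_betaPDF] at h
  simp_rw [mul_assoc, ENNReal.ofReal_mul (one_div_nonneg.mpr hB.le)] at h
  rw [lintegral_const_mul' _ _ ENNReal.ofReal_ne_top, one_div,
    ENNReal.ofReal_inv_of_pos hB] at h
  exact (inv_inj.mp (ENNReal.eq_inv_of_mul_eq_one_left h)).symm

lemma rpow_mul_one_sub_rpow_eq_exp {x y t : ℝ} (ht : t ∈ Ioo 0 1) :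
    t ^ (x - 1) * (1 - t) ^ (y - 1) = exp (log t * (x - 1) + log (1 - t) * (y - 1)) := by
  rw [rpow_def_of_pos ht.1, rpow_def_of_pos (sub_pos.2 ht.2), exp_add]

lemma beta_mul_add_mul_le_rpow_beta_mul_rpow_beta {x y u v a b : ℝ} (hx : 0 < x) (hy : 0 < y)
    (hu : 0 < u) (hv : 0 < v) (ha : 0 < a) (hb : 0 < b) (hab : a + b = 1) :
    beta (a * x + b * u) (a * y + b * v) ≤ beta x y ^ a * beta u v ^ b := by
  have hxy := (beta_pos hx hy).le
  have huv := (beta_pos hu hv).le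
  rw [← ENNReal.ofReal_le_ofReal_iff (by positivity), ENNReal.ofReal_mul (by positivity),
    ← ENNReal.ofReal_rpow_of_nonneg hxy ha.le, ← ENNReal.ofReal_rpow_of_nonneg huv hb.le,
    ← setLIntegral_rpow_mul_one_sub_rpow_eq_beta hx hy,
    ← setLIntegral_rpow_mul_one_sub_rpow_eq_beta hu hv,
    ← setLIntegral_rpow_mul_one_sub_rpow_eq_beta (by positivity) (by positivity)]
  calc _ = ∫⁻ t in Ioo 0 1, ENNReal.ofReal (t ^ (x - 1) * (1 - t) ^ (y - 1)) ^ a *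
        ENNReal.ofReal (t ^ (u - 1) * (1 - t) ^ (v - 1)) ^ b := by
        refine setLIntegral_congr_fun measurableSet_Ioo fun t ht => ?_
        simp only [rpow_mul_one_sub_rpow_eq_exp ht]
        rw [ENNReal.ofReal_rpow_of_nonneg (exp_pos _).le ha.le,
          ENNReal.ofReal_rpow_of_nonneg (exp_pos _).le hb.le, ← exp_mul, ← exp_mul,
          ← ENNReal.ofReal_mul (exp_pos _).le, ← exp_add]
        congr 2
        linear_combination (log t + log (1 - t)) * hab
    _ ≤ _ := ENNReal.lintegral_mul_norm_pow_le (by fun_prop) (by fun_prop) ha.le hb.le hab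

lemma convexOn_log_beta : ConvexOn ℝ (Ioi 0 ×ˢ Ioi 0) fun p : ℝ × ℝ => log (beta p.1 p.2) := by
  refine convexOn_iff_forall_pos.mpr
    ⟨(convex_Ioi 0).prod (convex_Ioi 0), fun p hp q hq a b ha hb hab => ?_⟩
  obtain ⟨hp₁, hp₂⟩ : 0 < p.1 ∧ 0 < p.2 := hp
  obtain ⟨hq₁, hq₂⟩ : 0 < q.1 ∧ 0 < q.2 := hq
  have hBp := beta_pos hp₁ hp₂
  have hBq := beta_pos hq₁ hq₂
  calc log (beta (a * p.1 + b * q.1) (a * p.2 + b * q.2))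
      ≤ log (beta p.1 p.2 ^ a * beta q.1 q.2 ^ b) :=
        log_le_log (beta_pos (by positivity) (by positivity))
          (beta_mul_add_mul_le_rpow_beta_mul_rpow_beta hp₁ hp₂ hq₁ hq₂ ha hb hab)
    _ = a * log (beta p.1 p.2) + b * log (beta q.1 q.2) := by
        rw [log_mul (by positivity) (by positivity), log_rpow hBp, log_rpow hBq]

lemma log_beta {x y : ℝ} (hx : 0 < x) (hy : 0 < y) :
    log (beta x y) = log (Gamma x) + log (Gamma y) - log (Gamma (x + y)) := by
  rw [beta, log_div (mul_pos (Gamma_pos_of_pos hx) (Gamma_pos_of_pos hy)).ne'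
    (Gamma_pos_of_pos (add_pos hx hy)).ne', log_mul (Gamma_pos_of_pos hx).ne'
    (Gamma_pos_of_pos hy).ne']

lemma concaveOn_log_Gamma_add_sub : ConcaveOn ℝ (Ioi 0 ×ˢ Ioi 0) fun p : ℝ × ℝ =>
    log (Gamma (p.1 + p.2)) - log (Gamma p.1) - log (Gamma p.2) :=
  convexOn_log_beta.neg.congr fun p ⟨hp₁, hp₂⟩ => by
    simp only [Pi.neg_apply, log_beta hp₁ hp₂]
    ring

lemma convex_setOf_forall_pos (ι : Type*) : Convex ℝ {α : ι → ℝ | ∀ i, 0 < α i} := by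
  simpa only [Set.pi, mem_univ, true_imp_iff, mem_Ioi] using
    convex_pi (s := univ) fun (_ : ι) _ => convex_Ioi (0 : ℝ)

lemma concaveOn_log_Gamma_sum_sub_sum {ι : Type*} (s : Finset ι) :
    ConcaveOn ℝ {α : ι → ℝ | ∀ i, 0 < α i} fun α =>
      log (Gamma (∑ i ∈ s, α i)) - ∑ i ∈ s, log (Gamma (α i)) := by
  rcases s.eq_empty_or_nonempty with rfl | hs
  · -- `Γ 0 = 0` and `log 0 = 0`, so the function vanishes identically.
    simpa using concaveOn_const (0 : ℝ) (convex_setOf_forall_pos ι)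
  induction hs using Finset.Nonempty.cons_induction with
  | singleton i => simpa using concaveOn_const (0 : ℝ) (convex_setOf_forall_pos ι)
  | cons i s hi hs ih =>
    let L : (ι → ℝ) →ₗ[ℝ] ℝ × ℝ := (LinearMap.proj i).prod (∑ j ∈ s, LinearMap.proj j)
    have hL : {α : ι → ℝ | ∀ i, 0 < α i} ⊆ L ⁻¹' (Ioi 0 ×ˢ Ioi 0) := fun α hα =>
      ⟨hα i, by simpa [L] using Finset.sum_pos (fun j _ => hα j) hs⟩
    have hpair := (concaveOn_log_Gamma_add_sub.comp_linearMap L).subset hL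
      (convex_setOf_forall_pos ι)
    refine (hpair.add ih).congr fun α _ => ?_
    simp only [Pi.add_apply, Function.comp_apply, LinearMap.prod_apply, LinearMap.coe_proj,
      LinearMap.coe_sum, Function.prod_apply, Function.eval, Finset.sum_apply, Finset.sum_cons, L]
    ring

lemma mapsTo_homothety_one_setOf_forall_pos {ι : Type*} {β : ℝ} (hβ : 0 < β) (hβ1 : β ≤ 1) :
    MapsTo (AffineMap.homothety (1 : ι → ℝ) β) {α | ∀ i, 0 < α i} {α | ∀ i, 0 < α i} :=
  fun α hα i => by
    have := mul_pos hβ (hα i)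
    simp only [AffineMap.homothety_apply, vsub_eq_sub, vadd_eq_add, Pi.add_apply, Pi.smul_apply,
      Pi.sub_apply, Pi.one_apply, smul_eq_mul]
    linarith

theorem logPosterior_concave_general (K : ℕ) (β γ η : ℝ)
    (hβ : 0 < β) (hβ1 : β ≤ 1) (hγ : 0 < γ) (hη : 0 < η)
    (ν s : Fin K → ℝ) :
    ConcaveOn ℝ {α : Fin K → ℝ | ∀ i, 0 < α i}
      (fun α : Fin K → ℝ =>
        Real.log (Real.Gamma ((K : ℝ) * (1 - β) + β * ∑ i, α i))
          - ∑ i, Real.log (Real.Gamma (β * α i + (1 - β)))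
          + β * ∑ i, α i * Real.log (s i)
          + γ * η * (Real.log (Real.Gamma (∑ i, α i))
              - ∑ i, Real.log (Real.Gamma (α i)))
          - γ * ∑ i, α i * ν i) := by
  have hconv := convex_setOf_forall_pos (Fin K)
  have hA := concaveOn_log_Gamma_sum_sub_sum (Finset.univ : Finset (Fin K))
  refine (((hA.comp_affineMap _).subset
      (mapsTo_homothety_one_setOf_forall_pos hβ hβ1).subset_preimage hconv).add
    ((hA.smul (mul_pos hγ hη).le).add (LinearMap.concaveOn
      (Fintype.linearCombination ℝ fun i => β * log (s i) - γ * ν i) hconv))).congr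
    fun α _ => ?_
  simp only [Pi.add_apply, Pi.smul_apply, smul_eq_mul, Function.comp_apply,
    AffineMap.homothety_apply, vsub_eq_sub, vadd_eq_add, Pi.sub_apply, Pi.one_apply,
    Fintype.linearCombination_apply]
  have hsum : ∑ i, (β * (α i - 1) + 1) = K * (1 - β) + β * ∑ i, α i := by
    simp only [mul_sub, mul_one, Finset.sum_add_distrib, Finset.sum_sub_distrib, Finset.sum_const,
      Finset.card_univ, Fintype.card_fin, nsmul_eq_mul, Finset.mul_sum]
    ring
  have hlin : ∑ i, α i * (β * log (s i) - γ * ν i) =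
      β * ∑ i, α i * log (s i) - γ * ∑ i, α i * ν i := by
    simp only [Finset.mul_sum, ← Finset.sum_sub_distrib]
    exact Finset.sum_congr rfl fun i _ => by ring
  have hshift : ∀ i, β * (α i - 1) + 1 = β * α i + (1 - β) := fun i => by ring
  rw [hsum, hlin]
  simp only [hshift]
  ring

/-- The log-posterior objective `L` is concave on the positive orthant. -/
theorem logPosterior_concave (K : ℕ) (hK : 2 ≤ K) (β γ η : ℝ)
    (hβ : 0 < β) (hβ1 : β ≤ 1) (hγ : 0 < γ) (hη : 0 < η)
    (ν s : Fin K → ℝ) (hs : ∀ i, 0 < s i) :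
    ConcaveOn ℝ {α : Fin K → ℝ | ∀ i, 0 < α i}
      (fun α : Fin K → ℝ =>
        Real.log (Real.Gamma ((K : ℝ) * (1 - β) + β * ∑ i, α i))
          - ∑ i, Real.log (Real.Gamma (β * α i + (1 - β)))
          + β * ∑ i, α i * Real.log (s i)
          + γ * η * (Real.log (Real.Gamma (∑ i, α i))
              - ∑ i, Real.log (Real.Gamma (α i)))
          - γ * ∑ i, α i * ν i) :=
  logPosterior_concave_general K β γ η hβ hβ1 hγ hη ν s
end

section
/- Minorization property of the surrogate: fix an integer K ≥ 2, parameters β ∈ (0,1], γ > 0, η > 0, ν ∈ ℝ^K, s ∈ ℝ^K with all entries positive, and a point α⁰ ∈ ℝ^K with all entries positive. Let u⁰ := ∑_{i=1}^K α⁰_i and x⁰ := K(1−β) + β·u⁰, and let L be as follows: L(α) := log Γ(K(1−β) + β·∑ α_i) − ∑_i log Γ(β·α_i + (1−β)) + β·∑_i α_i·log s_i + γ·η·[log Γ(∑ α_i) − ∑_i log Γ(α_i)] − γ·∑_i α_i·ν_i. Define the surrogate M(α) := log Γ(x⁰) + β·Ψ(x⁰)·(∑_i α_i − u⁰) − ∑_i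 log Γ(β·α_i + (1−β)) + β·∑_i α_i·log s_i + γ·η·[log Γ(u⁰) + Ψ(u⁰)·(∑_i α_i − u⁰) − ∑_i log Γ(α_i)] − γ·∑_i α_i·ν_i, where Ψ is the digamma function. Then M(α) ≤ L(α) for every α ∈ ℝ^K with all entries positive, and M(α⁰) = L(α⁰). -/
/-- The digamma function: derivative of `log ∘ Γ`. -/
noncomputable def digamma : ℝ → ℝ := deriv (fun x : ℝ => Real.log (Real.Gamma x))

lemma diffAt_logGamma {x : ℝ} (hx : 0 < x) :
    DifferentiableAt ℝ (fun x : ℝ => Real.log (Real.Gamma x)) x := by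
  have h : ∀ m : ℕ, x ≠ -m := fun m => (((neg_nonpos.2 (Nat.cast_nonneg m)).trans_lt hx).ne')
  exact (Real.differentiableAt_Gamma h).log (Real.Gamma_pos_of_pos hx).ne'

lemma tangent_le {x₀ y : ℝ} (hx : 0 < x₀) (hy : 0 < y) :
    Real.log (Real.Gamma x₀) + digamma x₀ * (y - x₀) ≤ Real.log (Real.Gamma y) := by
  set f : ℝ → ℝ := fun x : ℝ => Real.log (Real.Gamma x) with hf
  have hc : ConvexOn ℝ (Set.Ioi 0) f := Real.convexOn_log_Gamma
  rcases lt_trichotomy y x₀ with h | h | h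
  · have := hc.slope_le_deriv (Set.mem_Ioi.2 hy) (Set.mem_Ioi.2 hx) h (diffAt_logGamma hx)
    rw [slope_def_field] at this
    have hne : x₀ - y > 0 := by linarith
    rw [div_le_iff₀ hne] at this
    simp only [digamma, ← hf]
    nlinarith
  · simp [h]
  · have := hc.deriv_le_slope (Set.mem_Ioi.2 hx) (Set.mem_Ioi.2 hy) h (diffAt_logGamma hx)
    rw [slope_def_field] at this
    have hne : y - x₀ > 0 := by linarith
    rw [le_div_iff₀ hne] at this
    simp only [digamma, ← hf]
    nlinarith

/-- Minorization property of the surrogate: the tangent-line surrogate `M`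
built at the current iterate `α⁰` satisfies `M ≤ L` on the positive orthant
and `M(α⁰) = L(α⁰)`. -/
theorem surrogate_minorizes (K : ℕ) (hK : 2 ≤ K) (β γ η : ℝ)
    (hβ : 0 < β) (hβ1 : β ≤ 1) (hγ : 0 < γ) (hη : 0 < η)
    (ν s : Fin K → ℝ) (hs : ∀ i, 0 < s i)
    (α₀ : Fin K → ℝ) (hα₀ : ∀ i, 0 < α₀ i)
    (u₀ x₀ : ℝ) (hu₀ : u₀ = ∑ i, α₀ i) (hx₀ : x₀ = (K : ℝ) * (1 - β) + β * u₀)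
    (L M : (Fin K → ℝ) → ℝ)
    (hL : ∀ α, L α =
      Real.log (Real.Gamma ((K : ℝ) * (1 - β) + β * ∑ i, α i))
        - ∑ i, Real.log (Real.Gamma (β * α i + (1 - β)))
        + β * ∑ i, α i * Real.log (s i)
        + γ * η * (Real.log (Real.Gamma (∑ i, α i))
            - ∑ i, Real.log (Real.Gamma (α i)))
        - γ * ∑ i, α i * ν i)
    (hM : ∀ α, M α =
      Real.log (Real.Gamma x₀) + β * digamma x₀ * ((∑ i, α i) - u₀)
        - ∑ i, Real.log (Real.Gamma (β * α i + (1 - β)))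
        + β * ∑ i, α i * Real.log (s i)
        + γ * η * (Real.log (Real.Gamma u₀) + digamma u₀ * ((∑ i, α i) - u₀)
            - ∑ i, Real.log (Real.Gamma (α i)))
        - γ * ∑ i, α i * ν i) :
    (∀ α : Fin K → ℝ, (∀ i, 0 < α i) → M α ≤ L α) ∧ M α₀ = L α₀ := by
  have hKne : (Finset.univ : Finset (Fin K)).Nonempty := by
    simp [Finset.univ_nonempty_iff, Fin.pos_iff_nonempty.mp]
    exact Fin.pos_iff_nonempty.mp (by omega)
  have hu : 0 < u₀ := hu₀ ▸ Finset.sum_pos (fun i _ => hα₀ i) hKne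
  have hK1 : (0:ℝ) ≤ (K : ℝ) * (1 - β) := by
    have : (0:ℝ) ≤ (K : ℝ) := Nat.cast_nonneg K
    nlinarith
  have hx : 0 < x₀ := by rw [hx₀]; nlinarith
  constructor
  · intro α hα
    rw [hL α, hM α]
    have hS : 0 < ∑ i, α i := Finset.sum_pos (fun i _ => hα i) hKne
    have hy : 0 < (K:ℝ)*(1-β) + β * ∑ i, α i := by nlinarith
    have h1 := tangent_le hx hy
    have h2 := tangent_le hu hS
    have hx' : (K:ℝ)*(1-β) + β * (∑ i, α i) - x₀ = β * ((∑ i, α i) - u₀) := by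
      rw [hx₀]; ring
    rw [hx'] at h1
    have h2' := mul_le_mul_of_nonneg_left h2 (le_of_lt (mul_pos hγ hη))
    nlinarith [h1, h2']
  · rw [hL α₀, hM α₀, ← hu₀, hx₀]
    ring
end

section
/- Proposition 2 (monotone ascent of the fixed-point iterations): fix an integer K ≥ 2, parameters β ∈ (0,1], γ > 0, η > 0, ν ∈ ℝ^K, and s ∈ ℝ^K with all entries positive. Let L(α) := log Γ(K(1−β) + β·∑_{i=1}^K α_i) − ∑_{i=1}^K log Γ(β·α_i + (1−β)) + β·∑_i α_i·log s_i + γ·η·[log Γ(∑_i α_i) − ∑_i log Γ(α_i)] − γ·∑_i α_i·ν_i for α with positive entries. Suppose α^k ∈ ℝ^K has all entries positive and α^{k+1} ∈ ℝ^K has all entries positive and satisfies, for every j ∈ {1,…,K}, β·Ψ(β·α^{k+1}_j + (1−β)) + γ·η·Ψ(α^{k+1}_j) = β·Ψ(K(1−β) + β·∑_i α^k_i) + β·log s_j + γ·η·Ψ(∑_i α^k_i) − γ·ν_j, where Ψ is the digamma function. Then L(α^{k+1}) ≥ L(α^k). -/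
lemma logGamma_diffAt {z : ℝ} (hz : 0 < z) :
    DifferentiableAt ℝ (fun t : ℝ => Real.log (Real.Gamma t)) z := by
  refine DifferentiableAt.log (Real.differentiableAt_Gamma fun m => ?_)
    (Real.Gamma_pos_of_pos hz).ne'
  have : (0:ℝ) ≤ m := Nat.cast_nonneg m
  intro h; rw [h] at hz; linarith

/-- Tangent line inequality for the convex function `log ∘ Γ` on `(0, ∞)`. -/
lemma logGamma_tangent {x y : ℝ} (hx : 0 < x) (hy : 0 < y) :
    Real.log (Real.Gamma y) + digamma y * (x - y) ≤ Real.log (Real.Gamma x) := by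
  have hconv : ConvexOn ℝ (Set.Ioi (0:ℝ)) (fun t : ℝ => Real.log (Real.Gamma t)) :=
    Real.convexOn_log_Gamma
  rcases lt_trichotomy x y with h | h | h
  · have hs := hconv.slope_le_deriv (Set.mem_Ioi.2 hx) (Set.mem_Ioi.2 hy) h (logGamma_diffAt hy)
    rw [slope_def_field, div_le_iff₀ (by linarith : (0:ℝ) < y - x)] at hs
    have : digamma y = deriv (fun t : ℝ => Real.log (Real.Gamma t)) y := rfl
    nlinarith [hs]
  · subst h; simp
  · have hs := hconv.deriv_le_slope (Set.mem_Ioi.2 hy) (Set.mem_Ioi.2 hx) h (logGamma_diffAt hy)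
    rw [slope_def_field, le_div_iff₀ (by linarith : (0:ℝ) < x - y)] at hs
    have : digamma y = deriv (fun t : ℝ => Real.log (Real.Gamma t)) y := rfl
    nlinarith [hs]

/-- Proposition 2 (monotone ascent of the fixed-point iterations): if
`α^{k+1}` (positive entries) satisfies the fixed-point equations determined by
`α^k` (positive entries), then `L(α^{k+1}) ≥ L(α^k)`. -/
theorem fixedPoint_ascent (K : ℕ) (hK : 2 ≤ K) (β γ η : ℝ)
    (hβ : 0 < β) (hβ1 : β ≤ 1) (hγ : 0 < γ) (hη : 0 < η)
    (ν s : Fin K → ℝ) (hs : ∀ i, 0 < s i)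
    (L : (Fin K → ℝ) → ℝ)
    (hL : ∀ α, L α =
      Real.log (Real.Gamma ((K : ℝ) * (1 - β) + β * ∑ i, α i))
        - ∑ i, Real.log (Real.Gamma (β * α i + (1 - β)))
        + β * ∑ i, α i * Real.log (s i)
        + γ * η * (Real.log (Real.Gamma (∑ i, α i))
            - ∑ i, Real.log (Real.Gamma (α i)))
        - γ * ∑ i, α i * ν i)
    (αk αk1 : Fin K → ℝ) (hαk : ∀ i, 0 < αk i) (hαk1 : ∀ i, 0 < αk1 i)
    (hfix : ∀ j : Fin K,
      β * digamma (β * αk1 j + (1 - β)) + γ * η * digamma (αk1 j) =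
        β * digamma ((K : ℝ) * (1 - β) + β * ∑ i, αk i) + β * Real.log (s j)
          + γ * η * digamma (∑ i, αk i) - γ * ν j) :
    L αk1 ≥ L αk := by
  haveI : Nonempty (Fin K) := ⟨⟨0, by omega⟩⟩
  have hβ' : 0 ≤ 1 - β := by linarith
  have hSk : 0 < ∑ i, αk i := Finset.sum_pos (fun i _ => hαk i) Finset.univ_nonempty
  have hS1 : 0 < ∑ i, αk1 i := Finset.sum_pos (fun i _ => hαk1 i) Finset.univ_nonempty
  have hAnn : 0 ≤ (K : ℝ) * (1 - β) := mul_nonneg (Nat.cast_nonneg K) hβ'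
  have hAc : 0 < (K : ℝ) * (1 - β) + β * ∑ i, αk i := by nlinarith [mul_pos hβ hSk]
  have hAc1 : 0 < (K : ℝ) * (1 - β) + β * ∑ i, αk1 i := by nlinarith [mul_pos hβ hS1]
  -- tangent inequalities for the two "global" convex terms
  have h1 := logGamma_tangent hAc1 hAc
  have h2 := logGamma_tangent hS1 hSk
  have h2' := mul_le_mul_of_nonneg_left h2 (show (0:ℝ) ≤ γ * η by positivity)
  -- per-coordinate inequality
  have hper : ∀ j : Fin K,
      Real.log (Real.Gamma (β * αk1 j + (1 - β))) + γ * η * Real.log (Real.Gamma (αk1 j))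
        - β * (αk1 j * Real.log (s j)) + γ * (αk1 j * ν j)
        - (β * digamma ((K : ℝ) * (1 - β) + β * ∑ i, αk i)
            + γ * η * digamma (∑ i, αk i)) * αk1 j
      ≤ Real.log (Real.Gamma (β * αk j + (1 - β))) + γ * η * Real.log (Real.Gamma (αk j))
        - β * (αk j * Real.log (s j)) + γ * (αk j * ν j)
        - (β * digamma ((K : ℝ) * (1 - β) + β * ∑ i, αk i)
            + γ * η * digamma (∑ i, αk i)) * αk j := by
    intro j
    have hb0 : 0 < β * αk j + (1 - β) := by nlinarith [mul_pos hβ (hαk j)]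
    have hb1 : 0 < β * αk1 j + (1 - β) := by nlinarith [mul_pos hβ (hαk1 j)]
    have h3 := logGamma_tangent hb0 hb1
    have h4 := logGamma_tangent (hαk j) (hαk1 j)
    have h4' := mul_le_mul_of_nonneg_left h4 (show (0:ℝ) ≤ γ * η by positivity)
    have hf' : (β * digamma (β * αk1 j + (1 - β)) + γ * η * digamma (αk1 j))
          * (αk j - αk1 j) =
        (β * digamma ((K : ℝ) * (1 - β) + β * ∑ i, αk i) + β * Real.log (s j)
          + γ * η * digamma (∑ i, αk i) - γ * ν j) * (αk j - αk1 j) := by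
      rw [hfix j]
    nlinarith [h3, h4', hf']
  have hsum := Finset.sum_le_sum (fun j (_ : j ∈ Finset.univ) => hper j)
  simp only [Finset.sum_sub_distrib, Finset.sum_add_distrib, ← Finset.mul_sum] at hsum
  rw [hL, hL]
  nlinarith [h1, h2', hsum]
end
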